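/- Define g : (0,∞) → ℝ by g(x) := (1/x)·(1 − tanh(√(3x))/√(3x)). Then: (i) 0 < g(x) < 1 for all x > 0; (ii) g(x) → 1 as x → 0⁺; (iii) g(x) → 0 as x → ∞. Consequently, for a homogeneous star of fixed bare mass M_b > 0, the gravitational mass M_g(x) := M_b·g(x) satisfies 0 < M_g(x) < M_b for all x > 0, M_g(x) → M_b as x → 0⁺ (infinite dispersion), and M_g(x) → 0 as x → ∞ (infinite compression). -/

import Mathlib

/-! With `u = √(3x)` the mass ratio is `3 (u cosh u - sinh u) / (u³ cosh u)`. The numerator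
`φ(u) = u cosh u - sinh u` vanishes at `0` with `φ'(u) = u sinh u`, and comparing derivatives gives
`u³/3 < φ(u) < (u³/3) cosh u` for `u > 0`. Hence `1 / cosh √(3x) < g(x) < 1`, which yields the bounds
and, by squeezing, `g(x) → 1` as `x → 0⁺`; `g(x) → 0` at infinity because `0 < g(x) < 1/x`. -/

open Real Filter Topology

lemma pos_of_map_zero_of_hasDerivAt_pos {f f' : ℝ → ℝ} (h0 : f 0 = 0)
    (hf : ∀ x, HasDerivAt f (f' x) x) (hf' : ∀ x, 0 < x → 0 < f' x)
    {u : ℝ} (hu : 0 < u) : 0 < f u := by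
  have hmono : StrictMonoOn f (Set.Ici 0) := by
    refine strictMonoOn_of_deriv_pos (convex_Ici 0)
      (fun x _ => (hf x).continuousAt.continuousWithinAt) fun x hx => ?_
    rw [interior_Ici] at hx
    exact (hf x).deriv ▸ hf' x hx
  simpa [h0] using hmono Set.self_mem_Ici hu.le hu

lemma sinh_lt_mul_cosh {u : ℝ} (hu : 0 < u) : sinh u < u * cosh u := by
  have : 0 < u * cosh u - sinh u := by
    refine pos_of_map_zero_of_hasDerivAt_pos (f := fun x => x * cosh x - sinh x)
      (f' := fun x => x * sinh x) (by simp)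
      (fun x => ?_) (fun x hx => mul_pos hx (sinh_pos_iff.mpr hx)) hu
    refine (((hasDerivAt_id x).mul (hasDerivAt_cosh x)).sub (hasDerivAt_sinh x)).congr_deriv ?_
    simp only [id_eq]; ring
  linarith

lemma pow_three_div_three_lt_mul_cosh_sub_sinh {u : ℝ} (hu : 0 < u) :
    u ^ 3 / 3 < u * cosh u - sinh u := by
  have : 0 < u * cosh u - sinh u - u ^ 3 / 3 := by
    refine pos_of_map_zero_of_hasDerivAt_pos (f := fun x => x * cosh x - sinh x - x ^ 3 / 3)
      (f' := fun x => x * (sinh x - x)) (by simp)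
      (fun x => ?_) (fun x hx => mul_pos hx (by linarith [self_lt_sinh_iff.mpr hx])) hu
    refine ((((hasDerivAt_id x).mul (hasDerivAt_cosh x)).sub (hasDerivAt_sinh x)).sub
      ((hasDerivAt_pow 3 x).div_const 3)).congr_deriv ?_
    simp only [id_eq]; ring
  linarith

lemma mul_cosh_sub_sinh_lt {u : ℝ} (hu : 0 < u) :
    u * cosh u - sinh u < u ^ 3 / 3 * cosh u := by
  have : 0 < u ^ 3 / 3 * cosh u - (u * cosh u - sinh u) := by
    refine pos_of_map_zero_of_hasDerivAt_pos
      (f := fun x => x ^ 3 / 3 * cosh x - (x * cosh x - sinh x))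
      (f' := fun x => x * (x * cosh x - sinh x) + x ^ 3 / 3 * sinh x) (by simp)
      (fun x => ?_) (fun x hx => ?_) hu
    · refine ((((hasDerivAt_pow 3 x).div_const 3).mul (hasDerivAt_cosh x)).sub
        (((hasDerivAt_id x).mul (hasDerivAt_cosh x)).sub (hasDerivAt_sinh x))).congr_deriv ?_
      simp only [id_eq]; ring
    · exact add_pos (mul_pos hx (sub_pos.mpr (sinh_lt_mul_cosh hx)))
        (mul_pos (by positivity) (sinh_pos_iff.mpr hx))
  linarith

/-- The ratio `M_g / M_b` of gravitational to bare mass at compression `x = R_b / R`. -/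
noncomputable def massRatio (x : ℝ) : ℝ :=
  (1 / x) * (1 - tanh (√(3 * x)) / √(3 * x))

lemma massRatio_eq {x : ℝ} (hx : 0 < x) :
    massRatio x = 3 * (√(3 * x) * cosh √(3 * x) - sinh √(3 * x)) /
      (√(3 * x) ^ 3 * cosh √(3 * x)) := by
  have hu : 0 < √(3 * x) := sqrt_pos.mpr (by positivity)
  have hx' : x = √(3 * x) ^ 2 / 3 := by rw [sq_sqrt (by positivity)]; ring
  rw [massRatio, tanh_eq_sinh_div_cosh]
  set u := √(3 * x)
  have := cosh_pos u
  rw [hx']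
  field_simp

lemma massRatio_pos {x : ℝ} (hx : 0 < x) : 0 < massRatio x := by
  have hu : 0 < √(3 * x) := sqrt_pos.mpr (by positivity)
  have := sinh_lt_mul_cosh hu
  have := cosh_pos √(3 * x)
  rw [massRatio_eq hx]
  exact div_pos (by linarith) (by positivity)

lemma massRatio_lt_one {x : ℝ} (hx : 0 < x) : massRatio x < 1 := by
  have hu : 0 < √(3 * x) := sqrt_pos.mpr (by positivity)
  have := cosh_pos √(3 * x)
  rw [massRatio_eq hx, div_lt_one (by positivity)]
  linarith [mul_cosh_sub_sinh_lt hu]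

lemma inv_cosh_lt_massRatio {x : ℝ} (hx : 0 < x) : (cosh √(3 * x))⁻¹ < massRatio x := by
  have hu : 0 < √(3 * x) := sqrt_pos.mpr (by positivity)
  have := cosh_pos √(3 * x)
  rw [massRatio_eq hx, ← one_div, div_lt_div_iff₀ (by positivity) (by positivity)]
  nlinarith [pow_three_div_three_lt_mul_cosh_sub_sinh hu]

lemma massRatio_lt_inv {x : ℝ} (hx : 0 < x) : massRatio x < x⁻¹ := by
  have hu : 0 < √(3 * x) := sqrt_pos.mpr (by positivity)
  have : 0 < tanh √(3 * x) / √(3 * x) := by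
    rw [tanh_eq_sinh_div_cosh]
    exact div_pos (div_pos (sinh_pos_iff.mpr hu) (cosh_pos _)) hu
  rw [massRatio, one_div]
  exact mul_lt_of_lt_one_right (inv_pos.mpr hx) (by linarith)

lemma tendsto_massRatio_nhdsGT_zero : Tendsto massRatio (𝓝[>] 0) (𝓝 1) := by
  have hcont : Continuous fun x : ℝ => cosh √(3 * x) := by fun_prop
  have hlow : Tendsto (fun x : ℝ => (cosh √(3 * x))⁻¹) (𝓝[>] 0) (𝓝 1) := by
    simpa using ((hcont.tendsto 0).inv₀ (cosh_pos _).ne').mono_left nhdsWithin_le_nhds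
  refine tendsto_of_tendsto_of_tendsto_of_le_of_le' hlow tendsto_const_nhds ?_ ?_ <;>
    filter_upwards [self_mem_nhdsWithin] with x hx
  exacts [(inv_cosh_lt_massRatio hx).le, (massRatio_lt_one hx).le]

lemma tendsto_massRatio_atTop : Tendsto massRatio atTop (𝓝 0) := by
  refine tendsto_of_tendsto_of_tendsto_of_le_of_le' tendsto_const_nhds tendsto_inv_atTop_zero
    ?_ ?_ <;> filter_upwards [eventually_gt_atTop 0] with x hx
  exacts [(massRatio_pos hx).le, (massRatio_lt_inv hx).le]

/-- With `g(x) = (1/x)(1 − tanh(√(3x))/√(3x))`: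
(i) `0 < g(x) < 1` for all `x > 0`; (ii) `g(x) → 1` as `x → 0⁺`;
(iii) `g(x) → 0` as `x → ∞`. Consequently, for fixed bare mass `M_b > 0`
the gravitational mass `M_g(x) = M_b·g(x)` satisfies `0 < M_g(x) < M_b`,
`M_g(x) → M_b` as `x → 0⁺` (infinite dispersion) and `M_g(x) → 0` as
`x → ∞` (infinite compression). -/
theorem mass_ratio_bounds_and_limits :
    (∀ x : ℝ, 0 < x →
      0 < (1 / x) * (1 - Real.tanh (Real.sqrt (3 * x)) / Real.sqrt (3 * x)) ∧
      (1 / x) * (1 - Real.tanh (Real.sqrt (3 * x)) / Real.sqrt (3 * x)) < 1) ∧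
    Tendsto (fun x : ℝ => (1 / x) * (1 - Real.tanh (Real.sqrt (3 * x)) / Real.sqrt (3 * x)))
      (𝓝[>] 0) (𝓝 1) ∧
    Tendsto (fun x : ℝ => (1 / x) * (1 - Real.tanh (Real.sqrt (3 * x)) / Real.sqrt (3 * x)))
      atTop (𝓝 0) ∧
    ∀ M_b : ℝ, 0 < M_b →
      (∀ x : ℝ, 0 < x →
        0 < M_b * ((1 / x) * (1 - Real.tanh (Real.sqrt (3 * x)) / Real.sqrt (3 * x))) ∧
        M_b * ((1 / x) * (1 - Real.tanh (Real.sqrt (3 * x)) / Real.sqrt (3 * x))) < M_b) ∧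
      Tendsto (fun x : ℝ =>
          M_b * ((1 / x) * (1 - Real.tanh (Real.sqrt (3 * x)) / Real.sqrt (3 * x))))
        (𝓝[>] 0) (𝓝 M_b) ∧
      Tendsto (fun x : ℝ =>
          M_b * ((1 / x) * (1 - Real.tanh (Real.sqrt (3 * x)) / Real.sqrt (3 * x))))
        atTop (𝓝 0) := by
  refine ⟨fun x hx => ⟨massRatio_pos hx, massRatio_lt_one hx⟩, tendsto_massRatio_nhdsGT_zero,
    tendsto_massRatio_atTop, fun M_b hM => ⟨fun x hx => ?_, ?_, ?_⟩⟩
  · exact ⟨mul_pos hM (massRatio_pos hx), mul_lt_of_lt_one_right hM (massRatio_lt_one hx)⟩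
  · have := tendsto_massRatio_nhdsGT_zero.const_mul M_b
    rwa [mul_one] at this
  · have := tendsto_massRatio_atTop.const_mul M_b
    rwa [mul_zero] at this
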